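/- Assume the function u: A → B is injective. For every 0 ≤ i ≤ m, the commutative square of categories, whose top-left corner is the full subcategory Nec^tnd(C(μ,u))_{i,m+1} of totally non-degenerate necklaces in Nec(C(μ,u))_{i,m+1}, whose bottom-left corner is Nec^tnd(Δ[m+1])_{i,m+1} inside Nec(Δ[m+1])_{i,m+1}, with horizontal functors the full inclusions and vertical functors given by post-composition with Q, is a pullback square in the category of categories. Equivalently, a necklace in C(μ,u) from i to m+1 is totally non-degenerate if and only if its post-composition with Q is a totally non-degenerate necklace in Δ[m+1] from i to m+1. -/

import Mathlib

open CategoryTheory Simplicial Opposite Limits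

set_option synthInstance.maxHeartbeats 1000000
set_option maxHeartbeats 1000000

namespace Paper

/-- A simplex is degenerate if it is the image of a strictly lower-dimensional simplex
under a surjective simplicial operator. -/
def IsDegenerate (X : SSet) {n : ℕ} (x : X.obj (op (SimplexCategory.mk n))) : Prop :=
  ∃ (k : ℕ) (f : SimplexCategory.mk n ⟶ SimplexCategory.mk k)
    (y : X.obj (op (SimplexCategory.mk k))),
      k < n ∧ Function.Surjective f.toOrderHom ∧ X.map f.op y = x

/-- The combinatorial data of a necklace `Δ[m₁] ∨ ⋯ ∨ Δ[mₜ]`. -/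
structure Necklace where
  beads : List ℕ
  ne : beads ≠ []
  pos : 1 < beads.length → ∀ x ∈ beads, 0 < x

namespace Necklace

/-- The index of the last vertex of the necklace. -/
def total (N : Necklace) : ℕ := N.beads.sum

/-- The position of the `j`-th joint of the necklace. -/
def cum (N : Necklace) (j : ℕ) : ℕ := (N.beads.take j).sum

lemma cum_le_total (N : Necklace) (j : ℕ) : N.cum j ≤ N.total := by
  have := List.sum_take_add_sum_drop N.beads j
  unfold cum total
  omega

lemma cum_succ_eq (N : Necklace) {j : ℕ} (hj : j < N.beads.length) :
    N.cum (j + 1) = N.cum j + N.beads.get ⟨j, hj⟩ :=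
  List.sum_take_succ _ _ _

private lemma exists_interval : ∀ (l : List ℕ), l ≠ [] → ∀ k : ℕ, k ≤ l.sum →
    ∃ j, j < l.length ∧ (l.take j).sum ≤ k ∧ k ≤ (l.take (j + 1)).sum := by
  intro l
  induction l with
  | nil => intro h; exact absurd rfl h
  | cons a t ih =>
    intro _ k hk
    by_cases hka : k ≤ a
    · exact ⟨0, by simp, by simp, by simpa using hka⟩
    · push_neg at hka
      rcases eq_or_ne t [] with rfl | ht
      · simp only [List.sum_cons, List.sum_nil, Nat.add_zero] at hk
        omega
      · simp only [List.sum_cons] at hk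
        obtain ⟨j, hj, h1, h2⟩ := ih ht (k - a) (by omega)
        refine ⟨j + 1, by simp only [List.length_cons]; omega, ?_, ?_⟩
        · simp only [List.take_succ_cons, List.sum_cons]
          omega
        · simp only [List.take_succ_cons, List.sum_cons]
          omega

/-- The predicate: a simplex of `Δ[N.total]` lies in the `j`-th bead. -/
def InBead (N : Necklace) (j : ℕ) {x : SimplexCategory}
    (σ : x ⟶ SimplexCategory.mk N.total) : Prop :=
  ∀ i, N.cum j ≤ (σ.toOrderHom i : ℕ) ∧ (σ.toOrderHom i : ℕ) ≤ N.cum (j + 1)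

/-- The predicate defining the simplices of the necklace, as a subcomplex of
`Δ[N.total]`: those simplices contained in some bead. -/
def IsSimplex (N : Necklace) {x : SimplexCategory}
    (σ : x ⟶ SimplexCategory.mk N.total) : Prop :=
  ∃ j, j < N.beads.length ∧ N.InBead j σ

/-- The simplicial set `Δ[m₁] ∨ ⋯ ∨ Δ[mₜ]` associated to a necklace, realized as the
subcomplex of `Δ[N.total]` consisting of the simplices lying in one of the beads. -/
def toSSet (N : Necklace) : SSet where
  obj X := { σ : X.unop ⟶ SimplexCategory.mk N.total // N.IsSimplex σ }
  map f := TypeCat.ofHom fun σ => ⟨f.unop ≫ σ.1, by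
    obtain ⟨j, hj, hb⟩ := σ.2
    exact ⟨j, hj, fun i => hb _⟩⟩
  map_id X := by
    refine ConcreteCategory.hom_ext _ _ fun σ => ?_
    exact Subtype.ext (Category.id_comp _)
  map_comp f g := by
    refine ConcreteCategory.hom_ext _ _ fun σ => ?_
    exact Subtype.ext rfl

/-- The vertices of a necklace. -/
def vertex (N : Necklace) (k : Fin (N.total + 1)) :
    N.toSSet.obj (op (SimplexCategory.mk 0)) :=
  ⟨SimplexCategory.Hom.mk (OrderHom.const _ k), by
    obtain ⟨j, hj, h1, h2⟩ := exists_interval N.beads N.ne k (Nat.lt_succ_iff.mp k.isLt)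
    exact ⟨j, hj, fun _ => ⟨h1, h2⟩⟩⟩

/-- A simplex of a necklace lies in the last bead. -/
def InLastBead (N : Necklace) {x : SimplexCategoryᵒᵖ} (σ : N.toSSet.obj x) : Prop :=
  ∀ i, N.cum (N.beads.length - 1) ≤ (σ.1.toOrderHom i : ℕ)

/-- The `j`-th bead of a necklace, as a simplex of the necklace. -/
def beadSimplex (N : Necklace) (j : ℕ) (hj : j < N.beads.length) :
    N.toSSet.obj (op (SimplexCategory.mk (N.beads.get ⟨j, hj⟩))) :=
  ⟨SimplexCategory.Hom.mk
    { toFun := fun i => ⟨N.cum j + i, by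
        have h1 := N.cum_succ_eq hj
        have h2 := N.cum_le_total (j + 1)
        have h3 := i.isLt
        simp only [List.get_eq_getElem, SimplexCategory.len_mk] at h1 h3 ⊢
        omega⟩
      monotone' := fun i i' hii' => Nat.add_le_add_left hii' _ },
   ⟨j, hj, fun i => by
      refine ⟨Nat.le_add_right _ _, ?_⟩
      have h1 := N.cum_succ_eq hj
      have h3 := Nat.lt_succ_iff.mp i.isLt
      simp only [List.get_eq_getElem, SimplexCategory.len_mk] at h1 h3
      show N.cum j + (i : ℕ) ≤ N.cum (j + 1)
      omega⟩⟩

end Necklace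

/-- A necklace in a simplicial set `K` from `a` to `b`: a bi-pointed map from a necklace. -/
structure NecklaceIn (K : SSet) (a b : K.obj (op (SimplexCategory.mk 0))) where
  shape : Necklace
  map : shape.toSSet ⟶ K
  hα : map.app (op (SimplexCategory.mk 0)) (shape.vertex 0) = a
  hω : map.app (op (SimplexCategory.mk 0)) (shape.vertex (Fin.last _)) = b

namespace NecklaceIn

variable {K : SSet} {a b : K.obj (op (SimplexCategory.mk 0))}

/-- Morphisms of necklaces in `K` from `a` to `b`: bi-pointed maps of necklaces over `K`. -/
structure NecHom (S T : NecklaceIn K a b) where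
  g : S.shape.toSSet ⟶ T.shape.toSSet
  hα : g.app (op (SimplexCategory.mk 0)) (S.shape.vertex 0) = T.shape.vertex 0
  hω : g.app (op (SimplexCategory.mk 0)) (S.shape.vertex (Fin.last _)) =
        T.shape.vertex (Fin.last _)
  w : g ≫ T.map = S.map

lemma NecHom.ext' {S T : NecklaceIn K a b} {f g : NecHom S T} (h : f.g = g.g) : f = g := by
  cases f; cases g; cases h; rfl

instance : Category (NecklaceIn K a b) where
  Hom := NecHom
  id S := ⟨𝟙 _, rfl, rfl, Category.id_comp _⟩
  comp {S T U} f g := ⟨f.g ≫ g.g,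
    by rw [FunctorToTypes.comp, f.hα, g.hα],
    by rw [FunctorToTypes.comp, f.hω, g.hω],
    by rw [Category.assoc, g.w, f.w]⟩
  id_comp f := NecHom.ext' (Category.id_comp _)
  comp_id f := NecHom.ext' (Category.comp_id _)
  assoc f g h := NecHom.ext' (Category.assoc _ _ _)

end NecklaceIn

/-- Post-composition with a map of simplicial sets, as a functor between categories of
necklaces. -/
def postcomp {K L : SSet} (q : K ⟶ L) (a b : K.obj (op (SimplexCategory.mk 0))) :
    NecklaceIn K a b ⥤
      NecklaceIn L (q.app (op (SimplexCategory.mk 0)) a) (q.app (op (SimplexCategory.mk 0)) b) where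
  obj S := ⟨S.shape, S.map ≫ q,
    by rw [FunctorToTypes.comp, S.hα],
    by rw [FunctorToTypes.comp, S.hω]⟩
  map {S T} f := ⟨f.g, f.hα, f.hω, by rw [← Category.assoc]; exact congrArg (· ≫ q) f.w⟩
  map_id S := NecklaceIn.NecHom.ext' rfl
  map_comp f g := NecklaceIn.NecHom.ext' rfl

/-- A necklace in `K` is totally non-degenerate if each of its beads is a
non-degenerate simplex of `K`. -/
def TotallyNondeg {K : SSet} {a b : K.obj (op (SimplexCategory.mk 0))}
    (S : NecklaceIn K a b) : Prop :=
  ∀ (j : ℕ) (hj : j < S.shape.beads.length),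
    ¬ IsDegenerate K
      (S.map.app (op (SimplexCategory.mk (S.shape.beads.get ⟨j, hj⟩)))
        (S.shape.beadSimplex j hj))

/-- A functor is a discrete fibration if every morphism into the image of an object
admits a unique lift with prescribed codomain. -/
def IsDiscreteFibration {E C : Type*} [Category E] [Category C] (p : E ⥤ C) : Prop :=
  ∀ (e : E) (c : C) (g : c ⟶ p.obj e),
    ∃! φ : Σ e' : E, e' ⟶ e, ∃ h : p.obj φ.1 = c, p.map φ.2 = eqToHom h ≫ g

/-- The vertex `k` of the standard simplex `Δ[q]`, as a `0`-simplex. -/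
def vertStd (q : ℕ) (k : Fin (q + 1)) : (Δ[q] : SSet).obj (op (SimplexCategory.mk 0)) :=
  (SSet.stdSimplex.objEquiv).symm (SimplexCategory.const _ _ k)

/-- The vertex of `Δ[q]` underlying a `0`-simplex of `Δ[q]`. -/
def vertexOf (q : ℕ) (s : (Δ[q] : SSet).obj (op (SimplexCategory.mk 0))) : Fin (q + 1) :=
  (SSet.stdSimplex.objEquiv s).toOrderHom 0


/-- The vertex `k` of `Δ[q]`, as a map `Δ[0] ⟶ Δ[q]`. -/
def stdVert (q : ℕ) (k : Fin (q + 1)) : (Δ[0] : SSet) ⟶ (Δ[q] : SSet) :=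
  SSet.stdSimplex.map (SimplexCategory.const _ _ k)

section Cone

variable (A B : Type) (u : A → B) (l m : ℕ)
  (μ : SimplexCategory.mk l ⟶ SimplexCategory.mk m)

/-- The map `∐_{a ∈ A} Δ[l] ⟶ ∐_{b ∈ B} Δ[m]` sending the copy of `Δ[l]` indexed by `a`
into the copy of `Δ[m]` indexed by `u a` via `μ`. -/
noncomputable def toLB : (∐ fun _ : A => (Δ[l] : SSet)) ⟶ (∐ fun _ : B => (Δ[m] : SSet)) :=
  Sigma.desc fun a => SSet.stdSimplex.map μ ≫ Sigma.ι (fun _ : B => (Δ[m] : SSet)) (u a)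

/-- The map `∐_{a ∈ A} Δ[l] ⟶ ∐_{a ∈ A} Δ[l+1]` given on each summand by the face
`d^{l+1}`. -/
noncomputable def toLA1 : (∐ fun _ : A => (Δ[l] : SSet)) ⟶ (∐ fun _ : A => (Δ[l+1] : SSet)) :=
  Sigma.desc fun a =>
    SSet.stdSimplex.map (SimplexCategory.δ (Fin.last (l + 1))) ≫
      Sigma.ι (fun _ : A => (Δ[l+1] : SSet)) a

/-- The amalgam `(∐_{b ∈ B} Δ[m]) ⊔_{∐_{a ∈ A} Δ[l]} (∐_{a ∈ A} Δ[l+1])`. -/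
noncomputable def LL : SSet := pushout (toLB A B u l m μ) (toLA1 A l)

/-- The left leg of the defining span of `C(μ,u)`: it picks, in the `(i,b)`-summand, the
vertex `i` of the copy of `Δ[m]` indexed by `b`, and in the `a`-summand the vertex `l+1`
of the copy of `Δ[l+1]` indexed by `a`. -/
noncomputable def midToL :
    (∐ fun _ : ((Fin (m + 1) × B) ⊕ A) => (Δ[0] : SSet)) ⟶ LL A B u l m μ :=
  Sigma.desc fun (x : (Fin (m + 1) × B) ⊕ A) =>
    match x with
    | Sum.inl (i, b) => stdVert m i ≫ Sigma.ι (fun _ : B => (Δ[m] : SSet)) b ≫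
        pushout.inl (toLB A B u l m μ) (toLA1 A l)
    | Sum.inr a => stdVert (l + 1) (Fin.last (l + 1)) ≫
        Sigma.ι (fun _ : A => (Δ[l+1] : SSet)) a ≫
        pushout.inr (toLB A B u l m μ) (toLA1 A l)

/-- The right leg of the defining span of `C(μ,u)`: it sends the `(i,b)`-summands to the
point indexed by `i` and the `a`-summands to the point indexed by `m+1`. -/
noncomputable def midToR :
    (∐ fun _ : ((Fin (m + 1) × B) ⊕ A) => (Δ[0] : SSet)) ⟶
      (∐ fun _ : Fin (m + 2) => (Δ[0] : SSet)) :=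
  Sigma.desc fun (x : (Fin (m + 1) × B) ⊕ A) =>
    match x with
    | Sum.inl (i, _) => Sigma.ι (fun _ : Fin (m + 2) => (Δ[0] : SSet)) i.castSucc
    | Sum.inr _ => Sigma.ι (fun _ : Fin (m + 2) => (Δ[0] : SSet)) (Fin.last (m + 1))

/-- The simplicial set `C(μ,u)`, defined as the pushout of the span with legs `midToL`
and `midToR`. -/
noncomputable def CC : SSet := pushout (midToL A B u l m μ) (midToR A B m)

/-- The vertices `0, 1, …, m+1` of `C(μ,u)`, i.e. the images of the points of
`∐_{0 ≤ i ≤ m+1} Δ[0]` under the canonical map to the pushout. -/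
noncomputable def vertC (i : Fin (m + 2)) :
    (CC A B u l m μ).obj (op (SimplexCategory.mk 0)) :=
  (Sigma.ι (fun _ : Fin (m + 2) => (Δ[0] : SSet)) i ≫
      pushout.inr (midToL A B u l m μ) (midToR A B m)).app
    (op (SimplexCategory.mk 0)) (vertStd 0 0)

/-- The map `μ + 1 : [l+1] ⟶ [m+1]` extending `μ` by sending `l+1` to `m+1`. -/
def muPlus : SimplexCategory.mk (l + 1) ⟶ SimplexCategory.mk (m + 1) :=
  SimplexCategory.Hom.mk
    { toFun := fun i =>
        if h : (i : ℕ) < l + 1 then (μ.toOrderHom ⟨(i : ℕ), h⟩).castSucc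
        else Fin.last (m + 1)
      monotone' := by
        intro i j hij
        by_cases hi : (i : ℕ) < l + 1 <;> by_cases hj : (j : ℕ) < l + 1
        · simp only [hi, hj, dif_pos]
          exact Fin.castSucc_le_castSucc_iff.mpr (μ.toOrderHom.monotone hij)
        · simp only [hi, hj, dif_pos, dif_neg, not_false_iff]
          exact Fin.le_last _
        · exfalso
          have h' : (i : ℕ) ≤ (j : ℕ) := hij
          omega
        · simp only [hi, hj, dif_neg, not_false_iff]
          exact le_refl _ }

end Cone

end Paper

/-! Every simplex of `C(μ,u)` comes from one of the standard simplices `Δ[m]`, `Δ[l+1]`,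
`Δ[0]` out of which `C(μ,u)` is glued, and on each of them `Q` is induced by an injective map
of ordinals (`d^{m+1}`, `μ+1`, a vertex), hence is a monomorphism. Monomorphisms reflect
degeneracy, so a simplex of `C(μ,u)` is degenerate exactly when its image under `Q` is; applied
to the beads of a necklace this is the claim. -/

universe u

namespace SSet

instance : stdSimplex.{u}.PreservesMonomorphisms where
  preserves f _ := (NatTrans.mono_iff_mono_app _).2 fun _ => (mono_iff_injective _).2
    fun _ _ h => stdSimplex.objEquiv.injective <| (cancel_mono f).1 <|
      congrArg stdSimplex.objEquiv h

lemma exists_sigmaι_app_eq {ι : Type} (F : ι → SSet.{u}) {W : SimplexCategoryᵒᵖ}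
    (x : (∐ F).obj W) : ∃ i y, (Sigma.ι F i).app W y = x := by
  obtain ⟨⟨i⟩, y, hy⟩ := Types.jointly_surjective_of_isColimit
    (isColimitOfPreserves ((evaluation _ _).obj W) (coproductIsCoproduct F)) x
  exact ⟨i, y, hy⟩

lemma exists_pushout_inl_or_inr_app_eq {X Y Z : SSet.{u}} (f : X ⟶ Y) (g : X ⟶ Z)
    {W : SimplexCategoryᵒᵖ} (x : (pushout f g).obj W) :
    (∃ y, (pushout.inl f g).app W y = x) ∨ ∃ z, (pushout.inr f g).app W z = x :=
  Types.eq_or_eq_of_isPushout ((IsPushout.of_hasPushout f g).map ((evaluation _ _).obj W)) x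

lemma app_mem_degenerate_of_comp_mono {Y K L : SSet.{u}} (G : Y ⟶ K) (Q : K ⟶ L)
    [Mono (G ≫ Q)] {n : ℕ} (y : Y _⦋n⦌) (h : Q.app _ (G.app _ y) ∈ L.degenerate n) :
    G.app _ y ∈ K.degenerate n :=
  degenerate_app_apply ((degenerate_iff_of_mono (G ≫ Q) y).1 h) G

lemma app_mem_degenerate_iff_of_forall_exists_comp_eq_map {K : SSet.{u}} {q : ℕ}
    (Q : K ⟶ Δ[q])
    (hQ : ∀ {n : ℕ} (x : K _⦋n⦌), ∃ (p : ℕ) (G : Δ[p] ⟶ K) (y : Δ[p] _⦋n⦌) (ι : ⦋p⦌ ⟶ ⦋q⦌),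
      G.app _ y = x ∧ Mono ι ∧ G ≫ Q = SSet.stdSimplex.map ι)
    {n : ℕ} (x : K _⦋n⦌) :
    Q.app _ x ∈ Δ[q].degenerate n ↔ x ∈ K.degenerate n := by
  refine ⟨fun h => ?_, fun h => degenerate_app_apply h Q⟩
  obtain ⟨p, G, y, ι, rfl, _, hG⟩ := hQ x
  have : Mono (G ≫ Q) := hG ▸ stdSimplex.map_mono ι
  exact app_mem_degenerate_of_comp_mono G Q y h

end SSet

namespace Paper

lemma isDegenerate_iff_mem_degenerate (X : SSet) {n : ℕ} (x : X _⦋n⦌) :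
    IsDegenerate X x ↔ x ∈ X.degenerate n := by
  rw [SSet.mem_degenerate_iff]
  simp only [IsDegenerate, SimplexCategory.epi_iff_surjective, Set.mem_range]
  constructor
  · rintro ⟨k, f, y, hk, hf, rfl⟩
    exact ⟨k, hk, f, hf, y, rfl⟩
  · rintro ⟨k, hk, f, hf, y, rfl⟩
    exact ⟨k, f, y, hk, hf, rfl⟩

section Cone

variable (A B : Type) (u : A → B) (l m : ℕ)
  (μ : SimplexCategory.mk l ⟶ SimplexCategory.mk m)

section

variable {A B u l m μ}

lemma muPlus_injective (hμ : Function.Injective μ.toOrderHom) :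
    Function.Injective (muPlus l m μ).toOrderHom := by
  intro a b hab
  simp only [muPlus, SimplexCategory.Hom.toOrderHom_mk, OrderHom.coe_mk] at hab
  by_cases ha : (a : ℕ) < l + 1 <;> by_cases hb : (b : ℕ) < l + 1
  · rw [dif_pos ha, dif_pos hb] at hab
    exact Fin.ext (Fin.mk.inj_iff.1 (hμ (Fin.castSucc_injective _ hab)))
  · rw [dif_pos ha, dif_neg hb] at hab
    exact absurd hab (Fin.castSucc_lt_last _).ne
  · rw [dif_neg ha, dif_pos hb] at hab
    exact absurd hab.symm (Fin.castSucc_lt_last _).ne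
  · have ha' : (a : ℕ) < l + 2 := a.isLt
    have hb' : (b : ℕ) < l + 2 := b.isLt
    exact Fin.ext (by omega)

lemma exists_lift_comp_eq_stdSimplex_map_mono (hμ : Function.Injective μ.toOrderHom)
    (Q : CC A B u l m μ ⟶ (Δ[m+1] : SSet))
    (hQB : ∀ b : B,
      Sigma.ι (fun _ : B => (Δ[m] : SSet)) b ≫
        pushout.inl (toLB A B u l m μ) (toLA1 A l) ≫
        pushout.inl (midToL A B u l m μ) (midToR A B m) ≫ Q =
      SSet.stdSimplex.map (SimplexCategory.δ (Fin.last (m + 1))))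
    (hQA : ∀ a : A,
      Sigma.ι (fun _ : A => (Δ[l+1] : SSet)) a ≫
        pushout.inr (toLB A B u l m μ) (toLA1 A l) ≫
        pushout.inl (midToL A B u l m μ) (midToR A B m) ≫ Q =
      SSet.stdSimplex.map (muPlus l m μ))
    (hQR : ∀ i : Fin (m + 2),
      Sigma.ι (fun _ : Fin (m + 2) => (Δ[0] : SSet)) i ≫
        pushout.inr (midToL A B u l m μ) (midToR A B m) ≫ Q =
      stdVert (m + 1) i)
    {n : ℕ} (x : CC A B u l m μ _⦋n⦌) :
    ∃ (p : ℕ) (G : (Δ[p] : SSet) ⟶ CC A B u l m μ) (y : (Δ[p] : SSet) _⦋n⦌)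
      (ι : ⦋p⦌ ⟶ ⦋m + 1⦌), G.app _ y = x ∧ Mono ι ∧ G ≫ Q = SSet.stdSimplex.map ι := by
  -- `CC` is not reducibly a pushout, so `rw [Category.assoc]` fails; reassociate up to defeq.
  rcases SSet.exists_pushout_inl_or_inr_app_eq _ _ x with ⟨x, rfl⟩ | ⟨x, rfl⟩
  · rcases SSet.exists_pushout_inl_or_inr_app_eq _ _ x with ⟨x, rfl⟩ | ⟨x, rfl⟩
    · obtain ⟨b, y, rfl⟩ := SSet.exists_sigmaι_app_eq _ x
      exact ⟨m, _, y, _, rfl, inferInstance,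
        (Category.assoc _ _ _).trans ((Category.assoc _ _ _).trans (hQB b))⟩
    · obtain ⟨a, y, rfl⟩ := SSet.exists_sigmaι_app_eq _ x
      exact ⟨l + 1, _, y, _, rfl, SimplexCategory.mono_iff_injective.2 (muPlus_injective hμ),
        (Category.assoc _ _ _).trans ((Category.assoc _ _ _).trans (hQA a))⟩
  · obtain ⟨i, y, rfl⟩ := SSet.exists_sigmaι_app_eq _ x
    exact ⟨0, _, y, _, rfl,
      SimplexCategory.mono_iff_injective.2 fun _ _ _ => Subsingleton.elim (α := Fin 1) _ _,
      (Category.assoc _ _ _).trans (hQR i)⟩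

end

theorem statement_5 (hμ : Function.Injective μ.toOrderHom)
    (i : Fin (m + 1))
    (Q : CC A B u l m μ ⟶ (Δ[m+1] : SSet))
    (hQB : ∀ b : B,
      Sigma.ι (fun _ : B => (Δ[m] : SSet)) b ≫
        pushout.inl (toLB A B u l m μ) (toLA1 A l) ≫
        pushout.inl (midToL A B u l m μ) (midToR A B m) ≫ Q =
      SSet.stdSimplex.map (SimplexCategory.δ (Fin.last (m + 1))))
    (hQA : ∀ a : A,
      Sigma.ι (fun _ : A => (Δ[l+1] : SSet)) a ≫
        pushout.inr (toLB A B u l m μ) (toLA1 A l) ≫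
        pushout.inl (midToL A B u l m μ) (midToR A B m) ≫ Q =
      SSet.stdSimplex.map (muPlus l m μ))
    (hQR : ∀ i : Fin (m + 2),
      Sigma.ι (fun _ : Fin (m + 2) => (Δ[0] : SSet)) i ≫
        pushout.inr (midToL A B u l m μ) (midToR A B m) ≫ Q =
      stdVert (m + 1) i)
    :
    ∀ S : NecklaceIn (CC A B u l m μ) (vertC A B u l m μ i.castSucc)
        (vertC A B u l m μ (Fin.last (m + 1))),
      TotallyNondeg S ↔
        TotallyNondeg
          ((postcomp Q (vertC A B u l m μ i.castSucc)
            (vertC A B u l m μ (Fin.last (m + 1)))).obj S) := by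
  intro S
  refine forall_congr' fun j => forall_congr' fun hj => not_congr ?_
  rw [isDegenerate_iff_mem_degenerate, isDegenerate_iff_mem_degenerate]
  exact (SSet.app_mem_degenerate_iff_of_forall_exists_comp_eq_map Q
    (exists_lift_comp_eq_stdSimplex_map_mono hμ Q hQB hQA hQR) _).symm

end Cone

end Paper
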